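/- Let X and Y be compact Hausdorff spaces and let M = Lsc_b(Y)^{++} be the partially ordered abelian semigroup of bounded, strictly positive, lower semicontinuous functions Y → ℝ with pointwise order and addition, with the compact containment relation ≪ defined via increasing sequences. If f : X → M satisfies that {x ∈ X : g ≪ f(x)} is open in X for every g ∈ M, then the map f̃ : X × Y → ℝ defined by f̃(x,y) = f(x)(y) is lower semicontinuous. -/

import Mathlib

noncomputable section

set_option maxHeartbeats 1000000

/-- `a` is compactly contained in `b`: for every increasing sequence having a supremum
which dominates `b`, some term already dominates `a`. -/
def CompactlyContained {M : Type*} [Preorder M] (a b : M) : Prop :=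
  ∀ c : ℕ → M, Monotone c → ∀ s : M, IsLUB (Set.range c) s → b ≤ s → ∃ n, a ≤ c n

/-- The Riesz interpolation property. -/
def RieszInterpolation (M : Type*) [Preorder M] : Prop :=
  ∀ a₁ a₂ b₁ b₂ : M, a₁ ≤ b₁ → a₁ ≤ b₂ → a₂ ≤ b₁ → a₂ ≤ b₂ →
    ∃ c : M, a₁ ≤ c ∧ a₂ ≤ c ∧ c ≤ b₁ ∧ c ≤ b₂

/-- The partially ordered abelian semigroup `Lsc_b(Y)^{++}` of bounded, strictly
positive, lower semicontinuous real functions on `Y`, with pointwise order. -/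
def Lscb (Y : Type*) [TopologicalSpace Y] : Type _ :=
  {g : Y → ℝ // LowerSemicontinuous g ∧ (∀ y, 0 < g y) ∧ ∃ C : ℝ, ∀ y, g y ≤ C}

instance (Y : Type*) [TopologicalSpace Y] : PartialOrder (Lscb Y) :=
  Subtype.partialOrder _

/-!
Fix `(x₀, y₀)` and `α < f x₀ y₀`. Since `Y` is compact, the strictly positive lower
semicontinuous `f x₀` has a positive minimum, and Urysohn's lemma gives a continuous
`g > 0` with `g < f x₀` everywhere and `α < g y₀`. Such a `g` is compactly contained in
`f x₀`: the supremum of an increasing sequence `cₙ` in `Lsc_b(Y)^{++}` lies below the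
pointwise supremum, so the open sets `{g < cₙ}` increase and cover `Y`, and by
compactness one of them is all of `Y`. Hence `{x | g ≪ f x} × {y | α < g y}` is an open
neighbourhood of `(x₀, y₀)` on which `f x y ≥ g y > α`.
-/

theorem CompactlyContained.le {M : Type*} [Preorder M] {a b : M}
    (h : CompactlyContained a b) : a ≤ b := by
  obtain ⟨_, hn⟩ := h (fun _ => b) monotone_const b
    (by rw [Set.range_const]; exact isLUB_singleton) le_rfl
  exact hn

theorem exists_forall_lt_of_monotone_of_lowerSemicontinuous {Y ι : Type*} [TopologicalSpace Y]
    [CompactSpace Y] [Preorder ι] [IsDirectedOrder ι] [Nonempty ι] {g : Y → ℝ}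
    (hg : Continuous g) {c : ι → Y → ℝ} (hc : Monotone c)
    (hlsc : ∀ i, LowerSemicontinuous (c i)) (hlt : ∀ y, ∃ i, g y < c i y) :
    ∃ i, ∀ y, g y < c i y := by
  have hopen : ∀ i, IsOpen {y | g y < c i y} := fun i => by
    convert ((hlsc i).add hg.neg.lowerSemicontinuous).isOpen_preimage 0 using 1
    ext y
    simp [← sub_eq_add_neg]
  obtain ⟨i, hi⟩ := isCompact_univ.elim_directed_cover _ hopen
    (fun y _ => Set.mem_iUnion.2 (hlt y))
    (Monotone.directed_le fun _ _ hij _ hy => hy.trans_le (hc hij _))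
  exact ⟨i, fun y => hi (Set.mem_univ y)⟩

namespace Lscb

variable {Y : Type*} [TopologicalSpace Y]

theorem apply_le_ciSup_of_isLUB {ι : Type*} [Nonempty ι] {c : ι → Lscb Y} {s : Lscb Y}
    (hs : IsLUB (Set.range c) s) (y : Y) : s.1 y ≤ ⨆ i, (c i).1 y := by
  obtain ⟨C, hC⟩ := s.2.2.2
  have hbdd : ∀ y, BddAbove (Set.range fun i => (c i).1 y) := fun y =>
    ⟨C, by rintro _ ⟨i, rfl⟩; exact (hs.1 ⟨i, rfl⟩ y).trans (hC y)⟩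
  let σ : Lscb Y := ⟨fun y => ⨆ i, (c i).1 y, lowerSemicontinuous_ciSup hbdd fun i => (c i).2.1,
    fun y => ((c (Classical.arbitrary ι)).2.2.1 y).trans_le (le_ciSup (hbdd y) _),
    C, fun y => ciSup_le fun i => (hs.1 ⟨i, rfl⟩ y).trans (hC y)⟩
  exact hs.2 (show σ ∈ upperBounds (Set.range c) by
    rintro _ ⟨i, rfl⟩ y; exact le_ciSup (hbdd y) i) y

theorem compactlyContained_of_continuous_of_lt [CompactSpace Y] {g h : Lscb Y}
    (hg : Continuous g.1) (hlt : ∀ y, g.1 y < h.1 y) : CompactlyContained g h := by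
  intro c hc s hs hhs
  have hcover : ∀ y, ∃ n, g.1 y < (c n).1 y := fun y =>
    (lt_ciSup_iff ⟨s.1 y, by rintro _ ⟨n, rfl⟩; exact hs.1 ⟨n, rfl⟩ y⟩).1
      ((hlt y).trans_le ((hhs y).trans (apply_le_ciSup_of_isLUB hs y)))
  obtain ⟨n, hn⟩ := exists_forall_lt_of_monotone_of_lowerSemicontinuous hg
    (fun _ _ hmn => hc hmn) (fun n => (c n).2.1) hcover
  exact ⟨n, fun y => (hn y).le⟩

end Lscb

theorem LowerSemicontinuous.exists_continuous_pos_lt {Y : Type*} [TopologicalSpace Y]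
    [CompactSpace Y] [RegularSpace Y] {h : Y → ℝ} (hh : LowerSemicontinuous h)
    (hpos : ∀ y, 0 < h y) {y₀ : Y} {α : ℝ} (hα : α < h y₀) :
    ∃ g : Y → ℝ, Continuous g ∧ (∀ y, 0 < g y) ∧ (∀ y, g y < h y) ∧ α < g y₀ := by
  obtain ⟨ymin, -, hmin⟩ := (hh.lowerSemicontinuousOn _).exists_isMinOn ⟨y₀, Set.mem_univ _⟩
    isCompact_univ
  obtain ⟨β, hβ, hβh⟩ := exists_between (max_lt hα (hpos y₀))
  have hβpos : 0 < β := (le_max_right _ _).trans_lt hβ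
  obtain ⟨φ, hφ0, hφ1, hφ01⟩ := exists_continuous_zero_one_of_isCompact'
    isCompact_singleton (hh.isOpen_preimage β).isClosed_compl
    (Set.disjoint_singleton_left.2 fun h => h hβh)
  refine ⟨fun y => max (h ymin / 2) (β * φ y), by fun_prop,
    fun y => lt_max_of_lt_left (half_pos (hpos ymin)), fun y => max_lt ?_ ?_, ?_⟩
  · exact (half_lt_self (hpos ymin)).trans_le (hmin (Set.mem_univ y))
  · by_cases hy : β < h y
    · exact (mul_le_of_le_one_right hβpos.le (hφ01 y).2).trans_lt hy
    · simpa [hφ0 hy] using hpos y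
  · exact lt_max_of_lt_right (by simpa [hφ1 rfl] using (le_max_left _ _).trans_lt hβ)

theorem stmt15_general (X Y : Type*) [TopologicalSpace X]
    [TopologicalSpace Y] [CompactSpace Y] [T2Space Y]
    (f : X → Lscb Y)
    (hf : ∀ g : Lscb Y, IsOpen {x : X | CompactlyContained g (f x)}) :
    LowerSemicontinuous fun p : X × Y => (f p.1).1 p.2 := by
  rintro ⟨x₀, y₀⟩ α hα
  obtain ⟨g, hgc, hgpos, hglt, hαg⟩ := (f x₀).2.1.exists_continuous_pos_lt (f x₀).2.2.1 hα
  obtain ⟨C, hC⟩ := (f x₀).2.2.2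
  let G : Lscb Y := ⟨g, hgc.lowerSemicontinuous, hgpos, C, fun y => (hglt y).le.trans (hC y)⟩
  have hGx₀ : CompactlyContained G (f x₀) := Lscb.compactlyContained_of_continuous_of_lt hgc hglt
  filter_upwards [((hf G).prod (isOpen_lt continuous_const hgc)).mem_nhds ⟨hGx₀, hαg⟩]
    with p ⟨hpG, hpα⟩
  exact hpα.trans_le (hpG.le p.2)

theorem stmt15 (X Y : Type*) [TopologicalSpace X] [CompactSpace X] [T2Space X]
    [TopologicalSpace Y] [CompactSpace Y] [T2Space Y]
    (f : X → Lscb Y)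
    (hf : ∀ g : Lscb Y, IsOpen {x : X | CompactlyContained g (f x)}) :
    LowerSemicontinuous fun p : X × Y => (f p.1).1 p.2 :=
  stmt15_general X Y f hf
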